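/- arXiv:math/0403524 — 3 statements merged into one kernel-verified Lean document; each statement's English description precedes it below -/
import Mathlib

section
/- Let V = V₀ ⊕ V₁ be a nonzero finite-dimensional complex super vector space with grading involution ε, and let S be a set of homogeneous endomorphisms of V acting graded-irreducibly. Then the set of odd endomorphisms of V that supercommute with S is a complex subspace of End(V) of dimension at most one, and every nonzero element of this subspace is invertible. -/
/-!
A nonzero odd endomorphism `T` supercommuting with `S` anticommutes with `ε` and commutes or
anticommutes with each element of `S`, so its kernel is a graded `S`-invariant subspace; by
graded irreducibility the kernel is `0`, and `T` is invertible. Given two such maps `T` and `T₀`,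
an eigenvalue `c` of `T₀⁻¹ T` makes `T - c T₀` a non-injective element of the same space, hence
`T = c T₀`.
-/

namespace GradedSchur

section Supercommutant

variable (R : Type*) {A : Type*} [CommRing R] [Ring A] [Algebra R A]

def commutant (a : A) : Submodule R A :=
  LinearMap.ker (LinearMap.mulRight R a - LinearMap.mulLeft R a)

def anticommutant (a : A) : Submodule R A :=
  LinearMap.ker (LinearMap.mulRight R a + LinearMap.mulLeft R a)

def oddSupercommutant (ε : A) (S : Set A) : Submodule R A :=
  anticommutant R ε ⊓ ⨅ Φ ∈ S,
    (⨅ _ : Φ * ε = ε * Φ, commutant R Φ) ⊓ ⨅ _ : Φ * ε = -(ε * Φ), anticommutant R Φ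

variable {R}

theorem mem_commutant {a T : A} : T ∈ commutant R a ↔ T * a = a * T := by
  simp [commutant, sub_eq_zero]

theorem mem_anticommutant {a T : A} : T ∈ anticommutant R a ↔ T * a = -(a * T) := by
  simp [anticommutant, add_eq_zero_iff_eq_neg]

theorem mem_oddSupercommutant {ε T : A} {S : Set A} :
    T ∈ oddSupercommutant R ε S ↔
      T * ε = -(ε * T) ∧
        ∀ Φ ∈ S, (Φ * ε = ε * Φ → T * Φ = Φ * T) ∧ (Φ * ε = -(ε * Φ) → T * Φ = -(Φ * T)) := by
  simp [oddSupercommutant, Submodule.mem_iInf, mem_commutant, mem_anticommutant]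

end Supercommutant

section Irreducible

variable {K V : Type*} [Field K] [AddCommGroup V] [Module K V]

def IsGradedIrreducible (ε : Module.End K V) (S : Set (Module.End K V)) : Prop :=
  ∀ W : Submodule K V, (∀ x ∈ W, ε x ∈ W) → (∀ Φ ∈ S, ∀ x ∈ W, Φ x ∈ W) → W = ⊥ ∨ W = ⊤

theorem mem_ker_apply_of_mul_eq_or_eq_neg {T Φ : Module.End K V}
    (h : T * Φ = Φ * T ∨ T * Φ = -(Φ * T)) {x : V} (hx : x ∈ LinearMap.ker T) :
    Φ x ∈ LinearMap.ker T := by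
  rw [LinearMap.mem_ker] at hx ⊢
  rcases h with h | h
  · rw [← Module.End.mul_apply, h, Module.End.mul_apply, hx, map_zero]
  · rw [← Module.End.mul_apply, h, LinearMap.neg_apply, Module.End.mul_apply, hx, map_zero,
      neg_zero]

theorem IsGradedIrreducible.injective_of_mem_oddSupercommutant {ε : Module.End K V}
    {S : Set (Module.End K V)} (hirr : IsGradedIrreducible ε S)
    (hhom : ∀ Φ ∈ S, Φ * ε = ε * Φ ∨ Φ * ε = -(ε * Φ)) {T : Module.End K V}
    (hT : T ∈ oddSupercommutant K ε S) (hT0 : T ≠ 0) : Function.Injective T := by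
  rw [mem_oddSupercommutant] at hT
  obtain ⟨hTε, hTS⟩ := hT
  have hεker : ∀ x ∈ LinearMap.ker T, ε x ∈ LinearMap.ker T := fun x =>
    mem_ker_apply_of_mul_eq_or_eq_neg (Or.inr hTε)
  have hSker : ∀ Φ ∈ S, ∀ x ∈ LinearMap.ker T, Φ x ∈ LinearMap.ker T := fun Φ hΦ x =>
    mem_ker_apply_of_mul_eq_or_eq_neg <| (hhom Φ hΦ).imp (hTS Φ hΦ).1 (hTS Φ hΦ).2
  rcases hirr _ hεker hSker with h | h
  · exact LinearMap.ker_eq_bot.mp h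
  · exact absurd (LinearMap.ker_eq_top.mp h) hT0

end Irreducible

section Pencil

variable {K V : Type*} [Field K] [IsAlgClosed K] [AddCommGroup V] [Module K V]
  [FiniteDimensional K V]

theorem exists_ne_zero_apply_eq_smul_apply [Nontrivial V] {T₀ : Module.End K V}
    (hT₀ : Function.Bijective T₀) (T : Module.End K V) :
    ∃ c : K, ∃ v ≠ 0, T v = c • T₀ v := by
  let e := LinearEquiv.ofBijective T₀ hT₀
  obtain ⟨c, hc⟩ := Module.End.exists_eigenvalue (e.symm.toLinearMap ∘ₗ T)
  obtain ⟨v, hv, hv0⟩ := hc.exists_hasEigenvector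
  refine ⟨c, v, hv0, ?_⟩
  have hcv : e.symm (T v) = c • v := Module.End.mem_eigenspace_iff.mp hv
  rw [← map_smul, ← hcv]
  exact (e.apply_symm_apply (T v)).symm

theorem finrank_le_one_of_forall_injective {W : Submodule K (Module.End K V)}
    (hW : ∀ T ∈ W, T ≠ 0 → Function.Injective T) : Module.finrank K W ≤ 1 := by
  rcases eq_or_ne W ⊥ with hbot | hne
  · rw [hbot, finrank_bot]; exact zero_le_one
  obtain ⟨T₀, hT₀W, hT₀0⟩ := W.ne_bot_iff.mp hne
  have : Nontrivial V := by
    by_contra h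
    rw [not_nontrivial_iff_subsingleton] at h
    exact hT₀0 (Subsingleton.elim _ _)
  have hT₀inj := hW T₀ hT₀W hT₀0
  have hT₀bij : Function.Bijective T₀ := ⟨hT₀inj, LinearMap.injective_iff_surjective.mp hT₀inj⟩
  refine finrank_le_one ⟨T₀, hT₀W⟩ fun ⟨T, hTW⟩ => ?_
  obtain ⟨c, v, hv0, hv⟩ := exists_ne_zero_apply_eq_smul_apply hT₀bij T
  have hmem : T - c • T₀ ∈ W := W.sub_mem hTW (W.smul_mem c hT₀W)
  have hker : (T - c • T₀) v = 0 := by simp [hv]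
  have hzero : T - c • T₀ = 0 := by
    by_contra hne
    exact hv0 (hW _ hmem hne (hker.trans (map_zero _).symm))
  exact ⟨c, Subtype.ext (sub_eq_zero.mp hzero).symm⟩

end Pencil

end GradedSchur

open GradedSchur

theorem graded_schur_odd_general
    (V : Type*) [AddCommGroup V] [Module ℂ V] [FiniteDimensional ℂ V]
    (ε : Module.End ℂ V)
    (S : Set (Module.End ℂ V))
    (hhom : ∀ Φ ∈ S, Φ * ε = ε * Φ ∨ Φ * ε = -(ε * Φ))
    (hirr : ∀ W : Submodule ℂ V, (∀ x ∈ W, ε x ∈ W) →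
      (∀ Φ ∈ S, ∀ x ∈ W, Φ x ∈ W) → W = ⊥ ∨ W = ⊤) :
    ∃ W : Submodule ℂ (Module.End ℂ V),
      (∀ T : Module.End ℂ V, T ∈ W ↔
        (T * ε = -(ε * T) ∧
          ∀ Φ ∈ S, (Φ * ε = ε * Φ → T * Φ = Φ * T) ∧
                   (Φ * ε = -(ε * Φ) → T * Φ = -(Φ * T)))) ∧
      Module.finrank ℂ W ≤ 1 ∧
      ∀ T ∈ W, T ≠ 0 → Function.Bijective T := by
  have hinj : ∀ T ∈ oddSupercommutant ℂ ε S, T ≠ 0 → Function.Injective T := fun _ =>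
    IsGradedIrreducible.injective_of_mem_oddSupercommutant hirr hhom
  refine ⟨oddSupercommutant ℂ ε S, fun _ => mem_oddSupercommutant,
    finrank_le_one_of_forall_injective hinj, fun T hT hT0 => ?_⟩
  exact ⟨hinj T hT hT0, LinearMap.injective_iff_surjective.mp (hinj T hT hT0)⟩

/-- Graded Schur's lemma, odd part: if a set `S` of homogeneous endomorphisms of a
nonzero finite-dimensional complex super vector space `V` (with grading involution `ε`)
acts graded-irreducibly, then the odd endomorphisms of `V` supercommuting with `S`
form a complex subspace of `End(V)` of dimension at most one, all of whose nonzero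
elements are invertible. -/
theorem graded_schur_odd
    (V : Type*) [AddCommGroup V] [Module ℂ V] [FiniteDimensional ℂ V] [Nontrivial V]
    (ε : Module.End ℂ V) (hε : ε * ε = 1)
    (S : Set (Module.End ℂ V))
    (hhom : ∀ Φ ∈ S, Φ * ε = ε * Φ ∨ Φ * ε = -(ε * Φ))
    (hirr : ∀ W : Submodule ℂ V, (∀ x ∈ W, ε x ∈ W) →
      (∀ Φ ∈ S, ∀ x ∈ W, Φ x ∈ W) → W = ⊥ ∨ W = ⊤) :
    ∃ W : Submodule ℂ (Module.End ℂ V),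
      (∀ T : Module.End ℂ V, T ∈ W ↔
        (T * ε = -(ε * T) ∧
          ∀ Φ ∈ S, (Φ * ε = ε * Φ → T * Φ = Φ * T) ∧
                   (Φ * ε = -(ε * Φ) → T * Φ = -(Φ * T)))) ∧
      Module.finrank ℂ W ≤ 1 ∧
      ∀ T ∈ W, T ≠ 0 → Function.Bijective T :=
  graded_schur_odd_general V ε S hhom hirr
end

section
/- Let V = V₀ ⊕ V₁ be a nonzero finite-dimensional complex super vector space with grading involution ε, and let S be a set of homogeneous endomorphisms of V acting graded-irreducibly. If there exists a nonzero odd endomorphism of V supercommuting with S, then there exists an odd endomorphism J of V supercommuting with S which satisfies J ∘ J = id_V (an odd parity-reversing involution). -/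
/-- Graded Schur's lemma, type Q case: if a set `S` of homogeneous endomorphisms of a
nonzero finite-dimensional complex super vector space `V` (with grading involution `ε`)
acts graded-irreducibly and there is a nonzero odd endomorphism supercommuting with `S`,
then there is an odd endomorphism `J` supercommuting with `S` with `J ∘ J = id`,
i.e. an odd parity-reversing involution. -/
theorem graded_schur_odd_involution
    (V : Type*) [AddCommGroup V] [Module ℂ V] [FiniteDimensional ℂ V] [Nontrivial V]
    (ε : Module.End ℂ V) (hε : ε * ε = 1)
    (S : Set (Module.End ℂ V))
    (hhom : ∀ Φ ∈ S, Φ * ε = ε * Φ ∨ Φ * ε = -(ε * Φ))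
    (hirr : ∀ W : Submodule ℂ V, (∀ x ∈ W, ε x ∈ W) →
      (∀ Φ ∈ S, ∀ x ∈ W, Φ x ∈ W) → W = ⊥ ∨ W = ⊤)
    (T : Module.End ℂ V) (hT : T ≠ 0)
    (hTodd : T * ε = -(ε * T))
    (hTsc : ∀ Φ ∈ S, (Φ * ε = ε * Φ → T * Φ = Φ * T) ∧
                     (Φ * ε = -(ε * Φ) → T * Φ = -(Φ * T))) :
    ∃ J : Module.End ℂ V,
      J * ε = -(ε * J) ∧
      (∀ Φ ∈ S, (Φ * ε = ε * Φ → J * Φ = Φ * J) ∧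
                (Φ * ε = -(ε * Φ) → J * Φ = -(Φ * J))) ∧
      J * J = 1 := by
  -- T*T commutes with ε
  have hTTε : (T * T) * ε = ε * (T * T) := by
    rw [mul_assoc, hTodd, mul_neg, ← mul_assoc, hTodd, neg_mul, neg_neg, mul_assoc]
  -- T*T commutes with every Φ ∈ S
  have hTTS : ∀ Φ ∈ S, (T * T) * Φ = Φ * (T * T) := by
    intro Φ hΦ
    rcases hhom Φ hΦ with he | ho
    · have hc := (hTsc Φ hΦ).1 he
      rw [mul_assoc, hc, ← mul_assoc, hc, mul_assoc]
    · have hc := (hTsc Φ hΦ).2 ho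
      rw [mul_assoc, hc, mul_neg, ← mul_assoc, hc, neg_mul, neg_neg, mul_assoc]
  -- ker T is invariant
  have hkerε : ∀ x ∈ LinearMap.ker T, ε x ∈ LinearMap.ker T := by
    intro x hx
    have := congrArg (fun f : Module.End ℂ V => f x) hTodd
    simp only [Module.End.mul_apply, LinearMap.neg_apply] at this
    simp only [LinearMap.mem_ker] at hx ⊢
    rw [this, hx, map_zero, neg_zero]
  have hkerS : ∀ Φ ∈ S, ∀ x ∈ LinearMap.ker T, Φ x ∈ LinearMap.ker T := by
    intro Φ hΦ x hx
    simp only [LinearMap.mem_ker] at hx ⊢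
    rcases hhom Φ hΦ with he | ho
    · have hc := congrArg (fun f : Module.End ℂ V => f x) ((hTsc Φ hΦ).1 he)
      simp only [Module.End.mul_apply] at hc
      rw [hc, hx, map_zero]
    · have hc := congrArg (fun f : Module.End ℂ V => f x) ((hTsc Φ hΦ).2 ho)
      simp only [Module.End.mul_apply, LinearMap.neg_apply] at hc
      rw [hc, hx, map_zero, neg_zero]
  have hker : LinearMap.ker T = ⊥ := by
    rcases hirr _ hkerε hkerS with h | h
    · exact h
    · exfalso; apply hT
      ext x
      have : x ∈ LinearMap.ker T := h ▸ Submodule.mem_top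
      simpa using this
  -- eigenvalue of T*T
  obtain ⟨μ, hμ⟩ := Module.End.exists_eigenvalue (T * T)
  set W := Module.End.eigenspace (T * T) μ with hW
  have hWε : ∀ x ∈ W, ε x ∈ W := by
    intro x hx
    rw [Module.End.mem_eigenspace_iff] at hx ⊢
    have := congrArg (fun f : Module.End ℂ V => f x) hTTε
    simp only [Module.End.mul_apply] at this hx ⊢
    rw [this, hx, map_smul]
  have hWS : ∀ Φ ∈ S, ∀ x ∈ W, Φ x ∈ W := by
    intro Φ hΦ x hx
    rw [Module.End.mem_eigenspace_iff] at hx ⊢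
    have := congrArg (fun f : Module.End ℂ V => f x) (hTTS Φ hΦ)
    simp only [Module.End.mul_apply] at this hx ⊢
    rw [this, hx, map_smul]
  have hWtop : W = ⊤ := by
    rcases hirr W hWε hWS with h | h
    · exact absurd h hμ
    · exact h
  have hTT : T * T = μ • (1 : Module.End ℂ V) := by
    ext x
    have hx : x ∈ W := hWtop ▸ Submodule.mem_top
    rw [Module.End.mem_eigenspace_iff] at hx
    simpa using hx
  have hμ0 : μ ≠ 0 := by
    intro h0
    apply hT
    ext x
    have : T (T x) = 0 := by
      have := congrArg (fun f : Module.End ℂ V => f x) hTT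
      simpa [h0] using this
    have : T x ∈ LinearMap.ker T := this
    rw [hker] at this
    simpa using this
  obtain ⟨s, hs⟩ := IsAlgClosed.exists_pow_nat_eq μ (by norm_num : (0:ℕ) < 2)
  have hs0 : s ≠ 0 := by
    intro h0; apply hμ0; rw [← hs, h0]; simp
  refine ⟨s⁻¹ • T, ?_, ?_, ?_⟩
  · rw [smul_mul_assoc, hTodd, mul_smul_comm, smul_neg]
  · intro Φ hΦ
    constructor
    · intro he
      rw [smul_mul_assoc, (hTsc Φ hΦ).1 he, mul_smul_comm]
    · intro ho
      rw [smul_mul_assoc, (hTsc Φ hΦ).2 ho, mul_smul_comm, smul_neg]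
  · rw [smul_mul_assoc, mul_smul_comm, hTT, smul_smul, smul_smul]
    have h1 : s⁻¹ * s⁻¹ * μ = 1 := by
      field_simp
      rw [← hs]
    rw [h1, one_smul]
end

section
/- Let g be a finite-dimensional real Lie algebra, V a finite-dimensional real inner product space with orthonormal basis e₁,…,eₙ, and r : g → End(V) a Lie algebra representation by skew-adjoint operators. Let S : U(g) → U(g) ⊗ Cl(V) be the unique ℝ-algebra homomorphism with S(ι_U(X)) = ι_U(X) ⊗ 1 + 1 ⊗ (r X)~ for all X ∈ g (which exists by the universal property of U(g)). Then the ℝ-linear endomorphism F of U(g) ⊗ Cl(V) determined by F(x ⊗ ω) = S(x)·(1 ⊗ ω) for x ∈ U(g), ω ∈ Cl(V), is a linear bijection. (This is the algebraic core of the Thom isomorphism between the semi-direct and ordinary tensor products U(g) ⊗̂ Cl(V) ≅ U(g) ⊗ Cl(V).) -/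
/-!
Filter `U(g)` by the powers `M ^ k` of `M = span (1, ι g)`, and `U(g) ⊗ Cl(V)` by the images
`W k` of `M ^ k ⊗ Cl(V)`. Since `S (ι X) - ι X ⊗ 1` lies in `1 ⊗ Cl(V)` and `S` is
multiplicative, `S x - x ⊗ 1 ∈ W k` for `x ∈ M ^ (k + 1)`. Hence `F` is the identity on `W 0`
and `F - id` maps `W (k + 1)` into `W k`: `F` is unipotent with respect to an exhaustive
filtration, hence bijective.
-/

open scoped RealInnerProductSpace TensorProduct

attribute [local instance 100] LieRing.ofAssociativeRing

/-- The quantization `Ã = −(1/4) ∑ᵢ ι(eᵢ)·ι(A eᵢ)` of an endomorphism `A` of a real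
inner product space `V` inside the Clifford algebra of `V`. -/
noncomputable def quantize {V : Type*} [NormedAddCommGroup V] [InnerProductSpace ℝ V]
    {n : ℕ} (b : OrthonormalBasis (Fin n) ℝ V) (Q : QuadraticForm ℝ V)
    (A : V →ₗ[ℝ] V) : CliffordAlgebra Q :=
  -((1 : ℝ)/4) • ∑ i, CliffordAlgebra.ι Q (b i) * CliffordAlgebra.ι Q (A (b i))

theorem LinearMap.bijective_of_sub_self_mem_filtration {R E : Type*} [Ring R] [AddCommGroup E]
    [Module R E] (F : E →ₗ[R] E) (W : ℕ → Submodule R E) (hW : ∀ z, ∃ k, z ∈ W k)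
    (hF₀ : ∀ z ∈ W 0, F z = z) (hF : ∀ k, ∀ z ∈ W (k + 1), F z - z ∈ W k) :
    Function.Bijective F := by
  have eq_zero_of_mem : ∀ k, ∀ z ∈ W k, F z = 0 → z = 0 := by
    intro k
    induction k with
    | zero => intro z hz hFz; rw [← hF₀ z hz, hFz]
    | succ k ih =>
      intro z hz hFz
      exact ih z (by simpa [hFz] using hF k z hz) hFz
  have mem_range_of_mem : ∀ k, ∀ y ∈ W k, ∃ x, F x = y := by
    intro k
    induction k with
    | zero => exact fun y hy => ⟨y, hF₀ y hy⟩
    | succ k ih =>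
      intro y hy
      obtain ⟨x, hx⟩ := ih _ (hF k y hy)
      exact ⟨y - x, by rw [map_sub, hx, sub_sub_cancel]⟩
  refine ⟨(injective_iff_map_eq_zero F).2 fun z hFz => ?_, fun y => ?_⟩
  · obtain ⟨k, hk⟩ := hW z
    exact eq_zero_of_mem k z hk hFz
  · obtain ⟨k, hk⟩ := hW y
    exact mem_range_of_mem k y hk

section PowFiltration

variable {R A : Type*} [CommSemiring R] [Semiring A] [Algebra R A]

theorem Submodule.exists_mem_pow_span_insert_one_of_mem_adjoin {s : Set A} {x : A}
    (hx : x ∈ Algebra.adjoin R s) : ∃ k, x ∈ span R (insert 1 s) ^ k := by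
  set M := span R (insert 1 s)
  have mono : Monotone (M ^ ·) := fun _ _ =>
    pow_le_pow_right' (one_le.2 (subset_span (Set.mem_insert _ _)))
  induction hx using Algebra.adjoin_induction with
  | mem x hx => exact ⟨1, by simpa using subset_span (Set.mem_insert_of_mem _ hx)⟩
  | algebraMap r => exact ⟨0, by simp⟩
  | add x y _ _ hx hy =>
    obtain ⟨i, hi⟩ := hx
    obtain ⟨j, hj⟩ := hy
    exact ⟨max i j, add_mem (mono (le_max_left i j) hi) (mono (le_max_right i j) hj)⟩
  | mul x y _ _ hx hy =>
    obtain ⟨i, hi⟩ := hx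
    obtain ⟨j, hj⟩ := hy
    exact ⟨i + j, pow_add M i j ▸ mul_mem_mul hi hj⟩

end PowFiltration

section TensorFiltration

open Submodule

variable {R A C : Type*} [CommRing R] [Ring A] [Algebra R A] [Ring C] [Algebra R C]

variable (C) in
def tensorFiltration (M : Submodule R A) (k : ℕ) : Submodule R (A ⊗[R] C) :=
  span R (Set.image2 (· ⊗ₜ[R] ·) ((M ^ k : Submodule R A) : Set A) Set.univ)

variable {M : Submodule R A}

theorem tmul_mem_tensorFiltration {k : ℕ} {u : A} (hu : u ∈ M ^ k) (c : C) :
    u ⊗ₜ[R] c ∈ tensorFiltration C M k :=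
  subset_span (Set.mem_image2_of_mem hu (Set.mem_univ c))

theorem one_tmul_mem_tensorFiltration_zero (c : C) :
    (1 : A) ⊗ₜ[R] c ∈ tensorFiltration C M 0 :=
  tmul_mem_tensorFiltration (pow_zero M ▸ one_le.1 le_rfl) c

theorem tensorFiltration_mono (hM : (1 : A) ∈ M) : Monotone (tensorFiltration C M) :=
  fun _ _ hij => span_mono (Set.image2_subset_right (pow_le_pow_right' (one_le.2 hM) hij))

theorem tensorFiltration_mul_le (i j : ℕ) :
    tensorFiltration C M i * tensorFiltration C M j ≤ tensorFiltration C M (i + j) := by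
  rw [tensorFiltration, tensorFiltration, span_mul_span, span_le]
  rintro _ ⟨_, ⟨u, hu, c, -, rfl⟩, _, ⟨v, hv, d, -, rfl⟩, rfl⟩
  simp only [Algebra.TensorProduct.tmul_mul_tmul, SetLike.mem_coe]
  exact tmul_mem_tensorFiltration (pow_add M i j ▸ mul_mem_mul hu hv) _

theorem exists_mem_tensorFiltration (hM : (1 : A) ∈ M) (hA : ∀ x : A, ∃ k, x ∈ M ^ k)
    (z : A ⊗[R] C) : ∃ k, z ∈ tensorFiltration C M k := by
  induction z using TensorProduct.induction_on with
  | zero => exact ⟨0, zero_mem _⟩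
  | tmul x c =>
    obtain ⟨k, hk⟩ := hA x
    exact ⟨k, tmul_mem_tensorFiltration hk c⟩
  | add x y hx hy =>
    obtain ⟨i, hi⟩ := hx
    obtain ⟨j, hj⟩ := hy
    exact ⟨max i j, add_mem (tensorFiltration_mono hM (le_max_left i j) hi)
      (tensorFiltration_mono hM (le_max_right i j) hj)⟩

theorem AlgHom.sub_tmul_one_mem_tensorFiltration (hM : (1 : A) ∈ M) (S : A →ₐ[R] A ⊗[R] C)
    (hS : ∀ a ∈ M, S a - a ⊗ₜ 1 ∈ tensorFiltration C M 0) (k : ℕ) :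
    ∀ x ∈ M ^ (k + 1), S x - x ⊗ₜ 1 ∈ tensorFiltration C M k := by
  induction k with
  | zero => simpa using hS
  | succ k ih =>
    set W := tensorFiltration C M
    intro x hx
    rw [pow_succ] at hx
    refine Submodule.mul_induction_on hx (fun y hy a ha => ?_) fun x₁ x₂ h₁ h₂ => ?_
    · have e : S (y * a) - (y * a) ⊗ₜ[R] (1 : C) = (S y - y ⊗ₜ 1) * (S a - a ⊗ₜ 1)
          + (S y - y ⊗ₜ 1) * (a ⊗ₜ 1) + (y ⊗ₜ 1) * (S a - a ⊗ₜ 1) := by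
        rw [map_mul, ← one_mul (1 : C), ← Algebra.TensorProduct.tmul_mul_tmul]
        noncomm_ring
      have hy' : y ⊗ₜ[R] (1 : C) ∈ W (k + 1) := tmul_mem_tensorFiltration hy 1
      have ha' : a ⊗ₜ[R] (1 : C) ∈ W 1 := tmul_mem_tensorFiltration (by rwa [pow_one]) 1
      rw [e]
      refine add_mem (add_mem ?_ ?_) ?_
      · exact tensorFiltration_mono hM k.le_succ
          (tensorFiltration_mul_le k 0 (mul_mem_mul (ih y hy) (hS a ha)))
      · exact tensorFiltration_mul_le k 1 (mul_mem_mul (ih y hy) ha')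
      · exact tensorFiltration_mul_le (k + 1) 0 (mul_mem_mul hy' (hS a ha))
    · simpa only [map_add, TensorProduct.add_tmul, add_sub_add_comm] using add_mem h₁ h₂

theorem LinearMap.eq_self_of_mem_tensorFiltration_zero {S : A →ₐ[R] A ⊗[R] C}
    {F : A ⊗[R] C →ₗ[R] A ⊗[R] C} (hF : ∀ x ω, F (x ⊗ₜ ω) = S x * (1 ⊗ₜ ω)) :
    ∀ z ∈ tensorFiltration C M 0, F z = z := by
  suffices tensorFiltration C M 0 ≤ LinearMap.ker (F - LinearMap.id) by
    simpa [sub_eq_zero] using fun z hz => this hz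
  refine span_le.2 ?_
  rintro _ ⟨u, hu, c, -, rfl⟩
  obtain ⟨r, rfl⟩ := mem_one.1 (by simpa using hu)
  simp [hF, Algebra.TensorProduct.algebraMap_apply]

theorem LinearMap.sub_self_mem_tensorFiltration {S : A →ₐ[R] A ⊗[R] C}
    {F : A ⊗[R] C →ₗ[R] A ⊗[R] C} (hF : ∀ x ω, F (x ⊗ₜ ω) = S x * (1 ⊗ₜ ω)) (k : ℕ)
    (hS : ∀ x ∈ M ^ (k + 1), S x - x ⊗ₜ 1 ∈ tensorFiltration C M k) :
    ∀ z ∈ tensorFiltration C M (k + 1), F z - z ∈ tensorFiltration C M k := by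
  suffices tensorFiltration C M (k + 1) ≤ (tensorFiltration C M k).comap (F - LinearMap.id)
    from fun z hz => this hz
  refine span_le.2 ?_
  rintro _ ⟨u, hu, c, -, rfl⟩
  have e : F (u ⊗ₜ c) - u ⊗ₜ c = (S u - u ⊗ₜ 1) * (1 ⊗ₜ c) := by
    rw [hF, sub_mul, Algebra.TensorProduct.tmul_mul_tmul, one_mul, mul_one]
  simpa [e] using tensorFiltration_mul_le k 0
    (mul_mem_mul (hS u hu) (one_tmul_mem_tensorFiltration_zero c))

theorem LinearMap.bijective_of_apply_tmul_eq_mul_one_tmul {s : Set A}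
    (hs : Algebra.adjoin R s = ⊤) (S : A →ₐ[R] A ⊗[R] C)
    (hS : ∀ a ∈ s, ∃ c, S a = a ⊗ₜ 1 + 1 ⊗ₜ c) (F : A ⊗[R] C →ₗ[R] A ⊗[R] C)
    (hF : ∀ x ω, F (x ⊗ₜ ω) = S x * (1 ⊗ₜ ω)) : Function.Bijective F := by
  set M := span R (insert 1 s)
  have hM : (1 : A) ∈ M := subset_span (Set.mem_insert _ _)
  have hSM : ∀ a ∈ M, S a - a ⊗ₜ 1 ∈ tensorFiltration C M 0 := by
    suffices M ≤ (tensorFiltration C M 0).comap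
        (S.toLinearMap - Algebra.TensorProduct.includeLeft.toLinearMap) from
      fun a ha => this ha
    refine span_le.2 (Set.insert_subset ?_ fun a ha => ?_)
    · simp [Algebra.TensorProduct.one_def]
    · obtain ⟨c, hc⟩ := hS a ha
      simpa [hc] using one_tmul_mem_tensorFiltration_zero c
  have hA : ∀ x : A, ∃ k, x ∈ M ^ k := fun x =>
    exists_mem_pow_span_insert_one_of_mem_adjoin (hs ▸ Algebra.mem_top)
  exact F.bijective_of_sub_self_mem_filtration _ (exists_mem_tensorFiltration hM hA)
    (F.eq_self_of_mem_tensorFiltration_zero hF) fun k =>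
      F.sub_self_mem_tensorFiltration hF k (S.sub_tmul_one_mem_tensorFiltration hM hSM k)

end TensorFiltration

theorem UniversalEnvelopingAlgebra.adjoin_range_ι (R L : Type*) [CommRing R] [LieRing L]
    [LieAlgebra R L] : Algebra.adjoin R (Set.range (ι R (L := L))) = ⊤ := by
  have : Set.range (ι R (L := L)) = mkAlgHom R L '' Set.range (TensorAlgebra.ι R) := by
    rw [← Set.range_comp]; rfl
  rw [this, Algebra.adjoin_image, TensorAlgebra.adjoin_range_ι, Algebra.map_top,
    AlgHom.range_eq_top]
  exact RingCon.mkₐ_surjective _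

theorem thom_map_bijective_general
    {g : Type*} [LieRing g] [LieAlgebra ℝ g]
    {V : Type*} [NormedAddCommGroup V] [InnerProductSpace ℝ V]
    {n : ℕ} (b : OrthonormalBasis (Fin n) ℝ V)
    (Q : QuadraticForm ℝ V)
    (r : g →ₗ⁅ℝ⁆ Module.End ℝ V)
    (S : UniversalEnvelopingAlgebra ℝ g →ₐ[ℝ]
      UniversalEnvelopingAlgebra ℝ g ⊗[ℝ] CliffordAlgebra Q)
    (hS : ∀ X : g, S (UniversalEnvelopingAlgebra.ι ℝ X) =
      (UniversalEnvelopingAlgebra.ι ℝ X) ⊗ₜ[ℝ] 1 + 1 ⊗ₜ[ℝ] quantize b Q (r X))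
    (F : UniversalEnvelopingAlgebra ℝ g ⊗[ℝ] CliffordAlgebra Q →ₗ[ℝ]
      UniversalEnvelopingAlgebra ℝ g ⊗[ℝ] CliffordAlgebra Q)
    (hF : ∀ (x : UniversalEnvelopingAlgebra ℝ g) (ω : CliffordAlgebra Q),
      F (x ⊗ₜ[ℝ] ω) = S x * (1 ⊗ₜ[ℝ] ω)) :
    Function.Bijective F :=
  F.bijective_of_apply_tmul_eq_mul_one_tmul (UniversalEnvelopingAlgebra.adjoin_range_ι ℝ g) S
    (by rintro _ ⟨X, rfl⟩; exact ⟨_, hS X⟩) hF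

/-- Algebraic core of the Thom isomorphism: for a representation `r` of a
finite-dimensional real Lie algebra `g` by skew-adjoint operators on a
finite-dimensional real inner product space `V`, let `S : U(g) → U(g) ⊗ Cl(V)` be the
algebra homomorphism with `S(ι_U X) = ι_U(X) ⊗ 1 + 1 ⊗ (r X)~`.  Then the linear
endomorphism `F` of `U(g) ⊗ Cl(V)` determined by `F(x ⊗ ω) = S(x)·(1 ⊗ ω)` is a
linear bijection. -/
theorem thom_map_bijective
    {g : Type*} [LieRing g] [LieAlgebra ℝ g] [Module.Finite ℝ g]
    {V : Type*} [NormedAddCommGroup V] [InnerProductSpace ℝ V] [FiniteDimensional ℝ V]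
    {n : ℕ} (b : OrthonormalBasis (Fin n) ℝ V)
    (Q : QuadraticForm ℝ V) (hQ : ∀ v : V, Q v = -⟪v, v⟫)
    (r : g →ₗ⁅ℝ⁆ Module.End ℝ V)
    (hr : ∀ (X : g) (v w : V), ⟪r X v, w⟫ = -⟪v, r X w⟫)
    (S : UniversalEnvelopingAlgebra ℝ g →ₐ[ℝ]
      UniversalEnvelopingAlgebra ℝ g ⊗[ℝ] CliffordAlgebra Q)
    (hS : ∀ X : g, S (UniversalEnvelopingAlgebra.ι ℝ X) =
      (UniversalEnvelopingAlgebra.ι ℝ X) ⊗ₜ[ℝ] 1 + 1 ⊗ₜ[ℝ] quantize b Q (r X))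
    (F : UniversalEnvelopingAlgebra ℝ g ⊗[ℝ] CliffordAlgebra Q →ₗ[ℝ]
      UniversalEnvelopingAlgebra ℝ g ⊗[ℝ] CliffordAlgebra Q)
    (hF : ∀ (x : UniversalEnvelopingAlgebra ℝ g) (ω : CliffordAlgebra Q),
      F (x ⊗ₜ[ℝ] ω) = S x * (1 ⊗ₜ[ℝ] ω)) :
    Function.Bijective F :=
  thom_map_bijective_general b Q r S hS F hF
end
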